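/- Let G be a finite simple graph and let u be a simplicial vertex of G, i.e., a vertex whose open neighborhood N(u) induces a complete subgraph of G. Then γ_gr(G - u) ≥ γ_gr(G) - 1, where G - u is the induced subgraph of G on V(G) \ {u}. -/

import Mathlib

/-- The closed neighborhood `N[v] = {v} ∪ N(v)` of a vertex. -/
def closedNbhd {V : Type*} (G : SimpleGraph V) (v : V) : Set V :=
  insert v (G.neighborSet v)

/-- A sequence (list) of pairwise distinct vertices is legal if each vertex
footprints some vertex not dominated by the previous ones. -/
def IsLegalSeq {V : Type*} (G : SimpleGraph V) (l : List V) : Prop :=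
  l.Nodup ∧ ∀ i : Fin l.length, ∃ u,
    u ∈ closedNbhd G (l.get i) ∧
    ∀ j : Fin l.length, (j : ℕ) < (i : ℕ) → u ∉ closedNbhd G (l.get j)

/-- A legal dominating sequence. -/
def IsDomSeq {V : Type*} (G : SimpleGraph V) (l : List V) : Prop :=
  IsLegalSeq G l ∧ ∀ u : V, ∃ v ∈ l, u ∈ closedNbhd G v

/-- The Grundy domination number: the maximum length of a legal dominating sequence. -/
noncomputable def grundyDomNum {V : Type*} (G : SimpleGraph V) : ℕ :=
  sSup {k : ℕ | ∃ l : List V, IsDomSeq G l ∧ l.length = k}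

/-!
Take a longest legal dominating sequence of `G`. Distinct entries of a legal sequence have
distinct footprints, so at most one entry `t` has `u` as its only footprint. As `N(u)` is a
clique, `N[u] ⊆ N[x]` for every neighbour `x` of `u`; so if `t ≠ u`, then `u` does not occur in
the sequence at all: not before `t`, which footprints `u`, and not after `t`, where `u` would
footprint nothing. Deleting `t` (or `u`, if there is no such `t`) leaves a sequence of vertices
of `G - u`, each with a footprint other than `u` with respect to its predecessors; deleting
entries only enlarges footprints, so this sequence is legal in `G - u`, and it extends to a
legal dominating sequence there.
-/

theorem List.eq_of_append_cons_eq_append_cons {α : Type*} {a a' b b' : List α} {x x' : α}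
    (h : a ++ x :: b = a' ++ x' :: b') (hx : x ∉ a') (hx' : x' ∉ a) : x = x' := by
  rcases List.append_eq_append_iff.1 h with ⟨c, rfl, hc⟩ | ⟨c, rfl, hc⟩
  · cases c with
    | nil => exact (List.cons_eq_cons.1 (by simpa using hc)).1
    | cons z c => simp_all
  · cases c with
    | nil => exact (List.cons_eq_cons.1 (by simpa using hc.symm)).1
    | cons z c => simp_all

section

variable {V : Type*} {G : SimpleGraph V}

theorem self_mem_closedNbhd (G : SimpleGraph V) (v : V) : v ∈ closedNbhd G v := Set.mem_insert v _

theorem mem_closedNbhd_induce {s : Set V} {v w : s} :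
    w ∈ closedNbhd (G.induce s) v ↔ (w : V) ∈ closedNbhd G v := by
  simp [closedNbhd, Subtype.ext_iff]

def IsFootprint (G : SimpleGraph V) (a : List V) (x w : V) : Prop :=
  w ∈ closedNbhd G x ∧ ∀ v ∈ a, w ∉ closedNbhd G v

theorem isLegalSeq_iff {l : List V} :
    IsLegalSeq G l ↔ l.Nodup ∧ ∀ a x b, l = a ++ x :: b → ∃ w, IsFootprint G a x w := by
  refine and_congr_right fun _ => ⟨fun h a x b hl => ?_, fun h i => ?_⟩
  · subst hl
    obtain ⟨w, hwx, hwa⟩ := h ⟨a.length, by simp⟩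
    refine ⟨w, by simpa using hwx, fun v hv => ?_⟩
    obtain ⟨j, hj, rfl⟩ := List.getElem_of_mem hv
    simpa [List.getElem_append_left hj] using hwa ⟨j, by simp; omega⟩ hj
  · obtain ⟨w, hwx, hwa⟩ := h (l.take i) l[i] (l.drop (i + 1)) (by simp)
    refine ⟨w, hwx, fun j hj => hwa _ ?_⟩
    have hj' := List.getElem_mem (l := l.take i) (n := j) (by simp; omega)
    rwa [List.getElem_take] at hj'

theorem IsLegalSeq.exists_isFootprint {l a b : List V} {x : V} (hl : IsLegalSeq G l)
    (h : l = a ++ x :: b) : ∃ w, IsFootprint G a x w :=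
  (isLegalSeq_iff.1 hl).2 a x b h

theorem isLegalSeq_nil (G : SimpleGraph V) : IsLegalSeq G [] :=
  isLegalSeq_iff.2 ⟨List.nodup_nil, fun a x b h => by simp at h⟩

theorem IsLegalSeq.concat {l : List V} {x w : V} (hl : IsLegalSeq G l) (hx : x ∉ l)
    (hw : IsFootprint G l x w) : IsLegalSeq G (l ++ [x]) := by
  refine isLegalSeq_iff.2 ⟨by simpa using hl.1.concat hx, fun a y b h => ?_⟩
  obtain rfl | ⟨b, z, rfl⟩ := b.eq_nil_or_concat
  · obtain ⟨rfl, ⟨⟩⟩ := List.append_inj' h rfl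
    exact ⟨w, hw⟩
  · have hl_eq : l = a ++ y :: b :=
      (List.append_inj' (t₁ := [x]) (t₂ := [z]) (by simpa using h) rfl).1
    exact hl.exists_isFootprint hl_eq

theorem IsLegalSeq.exists_isDomSeq [Finite V] {l : List V} (hl : IsLegalSeq G l) :
    ∃ l', IsDomSeq G l' ∧ l.length ≤ l'.length := by
  by_cases hdom : ∀ y, ∃ v ∈ l, y ∈ closedNbhd G v
  · exact ⟨l, ⟨hl, hdom⟩, le_rfl⟩
  push Not at hdom
  obtain ⟨x, hx⟩ := hdom
  have hxl : x ∉ l := fun h => hx x h (self_mem_closedNbhd G x)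
  have hlx : IsLegalSeq G (l ++ [x]) := hl.concat hxl ⟨self_mem_closedNbhd G x, hx⟩
  have : Nat.card V - (l ++ [x]).length < Nat.card V - l.length := by
    have := Fintype.ofFinite V
    have := hlx.1.length_le_card
    simp only [List.length_append, List.length_singleton, Nat.card_eq_fintype_card] at *
    omega
  obtain ⟨l', hl', hlen⟩ := hlx.exists_isDomSeq
  exact ⟨l', hl', by simp at hlen; omega⟩
termination_by Nat.card V - l.length

theorem bddAbove_setOf_isDomSeq_length (G : SimpleGraph V) [Finite V] :
    BddAbove {k | ∃ l : List V, IsDomSeq G l ∧ l.length = k} := by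
  have := Fintype.ofFinite V
  exact ⟨Fintype.card V, by rintro _ ⟨l, hl, rfl⟩; exact hl.1.1.length_le_card⟩

theorem IsLegalSeq.length_le_grundyDomNum [Finite V] {l : List V} (hl : IsLegalSeq G l) :
    l.length ≤ grundyDomNum G := by
  obtain ⟨l', hl', hlen⟩ := hl.exists_isDomSeq
  exact hlen.trans (le_csSup (bddAbove_setOf_isDomSeq_length G) ⟨l', hl', rfl⟩)

theorem exists_isDomSeq_length_eq_grundyDomNum (G : SimpleGraph V) [Finite V] :
    ∃ l, IsDomSeq G l ∧ l.length = grundyDomNum G := by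
  obtain ⟨l, hl, -⟩ := (isLegalSeq_nil G).exists_isDomSeq
  exact Nat.sSup_mem (s := {k | ∃ l : List V, IsDomSeq G l ∧ l.length = k}) ⟨_, l, hl, rfl⟩
    (bddAbove_setOf_isDomSeq_length G)

theorem exists_isLegalSeq_induce_filter {s : Set V} (p : V → Bool) {l : List V} (hl : l.Nodup)
    (hs : ∀ x ∈ l, p x → x ∈ s)
    (hw : ∀ a x b, l = a ++ x :: b → p x → ∃ w, IsFootprint G a x w ∧ w ∈ s) :
    ∃ m : List s, IsLegalSeq (G.induce s) m ∧ m.map (↑) = l.filter p := by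
  induction l using List.reverseRecOn with
  | nil => exact ⟨[], isLegalSeq_nil _, rfl⟩
  | append_singleton l y ih =>
    obtain ⟨m, hm, hml⟩ := ih (hl.sublist (List.sublist_append_left _ _))
      (fun x hx => hs x (List.mem_append_left _ hx))
      (fun a x b h => hw a x (b ++ [y]) (by simp [h]))
    have mem_of_mem_m {v : s} (hv : v ∈ m) : (v : V) ∈ l :=
      List.mem_of_mem_filter (hml ▸ List.mem_map_of_mem hv)
    by_cases hy : p y
    · obtain ⟨w, ⟨hwy, hwl⟩, hws⟩ := hw l y [] rfl hy
      refine ⟨m ++ [⟨y, hs y (by simp) hy⟩], hm.concat ?_ (w := ⟨w, hws⟩) ⟨?_, ?_⟩,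
        by simp [hml, hy]⟩
      · exact fun hym => (List.nodup_append.1 hl).2.2 y (mem_of_mem_m hym) y (by simp) rfl
      · rwa [mem_closedNbhd_induce]
      · exact fun v hv => by rw [mem_closedNbhd_induce]; exact hwl v (mem_of_mem_m hv)
    · exact ⟨m, hm, by simp [hml, hy]⟩

theorem IsFootprint.unique {a a' b b' : List V} {x x' w : V} (h : a ++ x :: b = a' ++ x' :: b')
    (hw : IsFootprint G a x w) (hw' : IsFootprint G a' x' w) : x = x' :=
  List.eq_of_append_cons_eq_append_cons h (fun hx => hw'.2 x hx hw.1) (fun hx' => hw.2 x' hx' hw'.1)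

theorem closedNbhd_subset_of_isClique_neighborSet {u x : V} (hu : G.IsClique (G.neighborSet u))
    (hx : G.Adj u x) : closedNbhd G u ⊆ closedNbhd G x := by
  rintro w (rfl | hw)
  · exact Or.inr hx.symm
  · by_cases hwx : w = x
    · exact Or.inl hwx
    · exact Or.inr (hu hx hw (Ne.symm hwx))

theorem IsLegalSeq.notMem_of_isFootprint_of_isClique {l a b : List V} {x u : V}
    (hl : IsLegalSeq G l) (hu : G.IsClique (G.neighborSet u)) (h : l = a ++ x :: b) (hxu : x ≠ u)
    (hux : IsFootprint G a x u) : u ∉ l := by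
  intro hul
  obtain ⟨c, d, hcd⟩ := List.append_of_mem hul
  obtain ⟨w, hwu, hwc⟩ := hl.exists_isFootprint hcd
  have hxc : x ∈ c := by
    by_contra hxc
    exact hxu (List.eq_of_append_cons_eq_append_cons (h.symm.trans hcd) hxc
      (fun hua => hux.2 u hua (self_mem_closedNbhd G u)))
  have hadj : G.Adj u x := hux.1.resolve_left (Ne.symm hxu) |>.symm
  exact hwc x hxc (closedNbhd_subset_of_isClique_neighborSet hu hadj hwu)

theorem IsLegalSeq.exists_ne_imp_ne_and_isFootprint_ne {l : List V} {u : V} (hl : IsLegalSeq G l)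
    (hu : G.IsClique (G.neighborSet u)) :
    ∃ t, (∀ x ∈ l, x ≠ t → x ≠ u) ∧
      ∀ a x b, l = a ++ x :: b → x ≠ t → ∃ w, IsFootprint G a x w ∧ w ≠ u := by
  by_cases h : ∃ a t b, l = a ++ t :: b ∧ ∀ w, IsFootprint G a t w → w = u
  · obtain ⟨a, t, b, hat, ht⟩ := h
    have htu : IsFootprint G a t u := by
      obtain ⟨w, hw⟩ := hl.exists_isFootprint hat
      exact ht w hw ▸ hw
    refine ⟨t, fun x hx hxt hxu => ?_, fun a' x b' hax hxt => ?_⟩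
    · exact hl.notMem_of_isFootprint_of_isClique hu hat (hxu ▸ Ne.symm hxt) htu (hxu ▸ hx)
    · by_contra! hne
      obtain ⟨w, hw⟩ := hl.exists_isFootprint hax
      exact hxt (IsFootprint.unique (hax.symm.trans hat) (hne w hw ▸ hw) htu)
  · push Not at h
    exact ⟨u, fun x _ hxu => hxu, fun a x b hax _ => h a x b hax⟩

theorem IsLegalSeq.exists_isLegalSeq_induce_ne {l : List V} {u : V} (hl : IsLegalSeq G l)
    (hu : G.IsClique (G.neighborSet u)) :
    ∃ m : List {v | v ≠ u}, IsLegalSeq (G.induce {v | v ≠ u}) m ∧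
      l.length - 1 ≤ m.length := by
  classical
  obtain ⟨t, hne, hfoot⟩ := hl.exists_ne_imp_ne_and_isFootprint_ne hu
  obtain ⟨m, hm, hml⟩ := exists_isLegalSeq_induce_filter (· != t) hl.1
    (fun x hx hxt => hne x hx (by simpa using hxt))
    (fun a x b hax hxt => hfoot a x b hax (by simpa using hxt))
  refine ⟨m, hm, ?_⟩
  rw [← List.length_map (f := Subtype.val), hml, ← hl.1.erase_eq_filter, List.length_erase]
  split_ifs <;> omega

end

theorem grundy_simplicial_vertex_deletion {V : Type*} [Fintype V] (G : SimpleGraph V)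
    (u : V)
    (hsimp : ∀ x y : V, G.Adj u x → G.Adj u y → x ≠ y → G.Adj x y) :
    grundyDomNum G - 1 ≤ grundyDomNum (G.induce {v : V | v ≠ u}) := by
  obtain ⟨l, hl, hlen⟩ := exists_isDomSeq_length_eq_grundyDomNum G
  obtain ⟨m, hm, hlm⟩ :=
    hl.1.exists_isLegalSeq_induce_ne fun x hx y hy hxy => hsimp x y hx hy hxy
  calc grundyDomNum G - 1 = l.length - 1 := by rw [hlen]
    _ ≤ m.length := hlm
    _ ≤ grundyDomNum (G.induce {v : V | v ≠ u}) := hm.length_le_grundyDomNum
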